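/- Let π be a PMF on a countable set S, let O and L partition the coordinates so that π factors as π(o, l), and let ψ be a PMF on the O-marginal's domain with finite support contained in the support of the marginal π_O. Then the KL divergence gradient identity holds in the finite discrete setting: for a parameterized family π_θ(y) = f_θ(y)h(y)/Z_θ with Z_θ = ∑_y f_θ(y)h(y) and f_θ(y) = exp(θ·T(y))·r(y), one has ∂/∂θ D_KL(ψ ∥ (π_θ)_O) = E_{Y∼π_θ}[T(Y)] − E_{O∼ψ, L∼π_θ(·|O)}[T(O,L)], provided S is finite. -/

import Mathlib

/-!
Write `w = r h`, `Z θ = ∑_y exp(θ T y) w y` and `g_o θ = ∑_l exp(θ T(o,l)) w(o,l)`, so that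
`(π_θ)_O(o) = g_o θ / Z θ` and, since `∑ ψ = 1`,
`D_KL(ψ ∥ (π_θ)_O) = ∑ ψ log ψ - ∑_o ψ(o) log g_o θ + log Z θ`.
The derivative of a log-partition function is the mean of `T` under the corresponding Gibbs
distribution, and the conditional `π_θ(· | o)` is itself the Gibbs distribution normalised by `g_o`.
-/

open Real Finset

noncomputable section

section Gibbs

variable {ι : Type*} [Fintype ι]

def partitionFn (T w : ι → ℝ) (θ : ℝ) : ℝ :=
  ∑ y, exp (θ * T y) * w y

def gibbs (T w : ι → ℝ) (θ : ℝ) (y : ι) : ℝ :=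
  exp (θ * T y) * w y / partitionFn T w θ

lemma partitionFn_pos [Nonempty ι] {T w : ι → ℝ} (hw : ∀ y, 0 < w y) (θ : ℝ) :
    0 < partitionFn T w θ :=
  sum_pos (fun y _ => mul_pos (exp_pos _) (hw y)) univ_nonempty

lemma hasDerivAt_partitionFn (T w : ι → ℝ) (θ : ℝ) :
    HasDerivAt (partitionFn T w) (∑ y, exp (θ * T y) * w y * T y) θ :=
  HasDerivAt.fun_sum fun y _ =>
    ((hasDerivAt_mul_const (T y)).exp.mul_const (w y)).congr_deriv (by ring)

lemma hasDerivAt_log_partitionFn {T w : ι → ℝ} {θ : ℝ} (hZ : partitionFn T w θ ≠ 0) :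
    HasDerivAt (fun θ => log (partitionFn T w θ)) (∑ y, gibbs T w θ y * T y) θ := by
  convert (hasDerivAt_partitionFn T w θ).log hZ using 1
  simp only [gibbs, sum_div, div_mul_eq_mul_div]

variable {α β : Type*} [Fintype α] [Fintype β]

lemma sum_gibbs_prod_mk (T w : α × β → ℝ) (θ : ℝ) (a : α) :
    ∑ b, gibbs T w θ (a, b) =
      partitionFn (fun b => T (a, b)) (fun b => w (a, b)) θ / partitionFn T w θ := by
  simp only [gibbs, partitionFn, sum_div]

lemma gibbs_div_sum_gibbs_prod_mk {T w : α × β → ℝ} {θ : ℝ} (hZ : partitionFn T w θ ≠ 0)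
    (a : α) (b : β) :
    gibbs T w θ (a, b) / ∑ b', gibbs T w θ (a, b') =
      gibbs (fun b => T (a, b)) (fun b => w (a, b)) θ b := by
  rw [sum_gibbs_prod_mk, gibbs, gibbs, div_div_div_cancel_right₀ hZ]

end Gibbs

lemma mul_log_div_eq_mul_sub {x q : ℝ} (hq : q ≠ 0) : x * log (x / q) = x * (log x - log q) := by
  rcases eq_or_ne x 0 with rfl | hx
  · simp
  · rw [log_div hx hq]

lemma hasDerivAt_sum_mul_log_div_div {ι : Type*} [Fintype ι] (ψ : ι → ℝ) (hψ : ∑ i, ψ i = 1)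
    {g : ι → ℝ → ℝ} {Z : ℝ → ℝ} {g' : ι → ℝ} {Z' θ₀ : ℝ}
    (hg : ∀ i θ, g i θ ≠ 0) (hZ : ∀ θ, Z θ ≠ 0)
    (hg' : ∀ i, HasDerivAt (fun θ => log (g i θ)) (g' i) θ₀)
    (hZ' : HasDerivAt (fun θ => log (Z θ)) Z' θ₀) :
    HasDerivAt (fun θ => ∑ i, ψ i * log (ψ i / (g i θ / Z θ))) (Z' - ∑ i, ψ i * g' i) θ₀ := by
  have hsplit : (fun θ => ∑ i, ψ i * log (ψ i / (g i θ / Z θ))) =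
      fun θ => ∑ i, ψ i * (log (ψ i) - log (g i θ)) + log (Z θ) := by
    funext θ
    simp only [mul_log_div_eq_mul_sub (div_ne_zero (hg _ θ) (hZ θ)), log_div (hg _ θ) (hZ θ),
      sub_sub_eq_add_sub, add_sub_right_comm, mul_add, sum_add_distrib, ← sum_mul, hψ, one_mul]
  rw [hsplit]
  refine (HasDerivAt.fun_sum (fun i _ =>
    ((hg' i).const_sub (log (ψ i))).const_mul (ψ i))).add hZ' |>.congr_deriv ?_
  simp only [mul_neg, sum_neg_distrib]
  ring

end

theorem stmt_19_general {O L : Type*} [Fintype O] [Fintype L] [Nonempty O] [Nonempty L]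
    (T : O × L → ℝ) (h r : O × L → ℝ) (hh : ∀ y, 0 < h y) (hr : ∀ y, 0 < r y)
    (ψ : O → ℝ) (hψ1 : ∑ o, ψ o = 1)
    (pi_ : ℝ → O × L → ℝ)
    (hpi : ∀ (θ : ℝ) (y : O × L),
      pi_ θ y = Real.exp (θ * T y) * r y * h y
        / ∑ z : O × L, Real.exp (θ * T z) * r z * h z)
    (marg : ℝ → O → ℝ) (hmarg : ∀ θ o, marg θ o = ∑ l, pi_ θ (o, l))
    (θ₀ : ℝ) :
    HasDerivAt (fun θ : ℝ => ∑ o, ψ o * Real.log (ψ o / marg θ o))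
      ((∑ y : O × L, pi_ θ₀ y * T y)
        - ∑ o, ψ o * ∑ l, (pi_ θ₀ (o, l) / marg θ₀ o) * T (o, l)) θ₀ := by
  set w : O × L → ℝ := fun y => r y * h y
  have hw : ∀ y, 0 < w y := fun y => mul_pos (hr y) (hh y)
  have hZ : ∀ θ, partitionFn T w θ ≠ 0 := fun θ => (partitionFn_pos hw θ).ne'
  have hpi_gibbs : pi_ = gibbs T w := by
    funext θ y
    simp only [hpi, gibbs, partitionFn, w, mul_assoc]
  subst hpi_gibbs
  simp only [hmarg, gibbs_div_sum_gibbs_prod_mk (hZ θ₀)]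
  simp only [sum_gibbs_prod_mk]
  exact hasDerivAt_sum_mul_log_div_div ψ hψ1
    (fun o θ => (partitionFn_pos (fun l => hw (o, l)) θ).ne') hZ
    (fun o => hasDerivAt_log_partitionFn (partitionFn_pos (fun l => hw (o, l)) θ₀).ne')
    (hasDerivAt_log_partitionFn (hZ θ₀))

/-- contrastive-Hebbian KL gradient identity for a finite exponential
family π_θ(y) ∝ exp(θ·T(y)) r(y) h(y) with observed/latent split S = O × L:
∂/∂θ D_KL(ψ ∥ (π_θ)_O) = E_{Y∼π_θ}[T(Y)] − E_{O∼ψ, L∼π_θ(·|O)}[T(O,L)]. -/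
theorem stmt_19 {O L : Type*} [Fintype O] [Fintype L] [Nonempty O] [Nonempty L]
    (T : O × L → ℝ) (h r : O × L → ℝ) (hh : ∀ y, 0 < h y) (hr : ∀ y, 0 < r y)
    (ψ : O → ℝ) (hψ0 : ∀ o, 0 ≤ ψ o) (hψ1 : ∑ o, ψ o = 1)
    (pi_ : ℝ → O × L → ℝ)
    (hpi : ∀ (θ : ℝ) (y : O × L),
      pi_ θ y = Real.exp (θ * T y) * r y * h y
        / ∑ z : O × L, Real.exp (θ * T z) * r z * h z)
    (marg : ℝ → O → ℝ) (hmarg : ∀ θ o, marg θ o = ∑ l, pi_ θ (o, l))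
    (θ₀ : ℝ) :
    HasDerivAt (fun θ : ℝ => ∑ o, ψ o * Real.log (ψ o / marg θ o))
      ((∑ y : O × L, pi_ θ₀ y * T y)
        - ∑ o, ψ o * ∑ l, (pi_ θ₀ (o, l) / marg θ₀ o) * T (o, l)) θ₀ :=
  stmt_19_general T h r hh hr ψ hψ1 pi_ hpi marg hmarg θ₀
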